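/- Let K be a convex body in ℝⁿ and S ⊂ K a maximum-volume nondegenerate simplex. Then K ⊆ (n+2)S, where (n+2)S is the homothet of S with ratio n+2 about the centroid of S. Equivalently, the absorption index satisfies ξ(K;S) ≤ n+2. -/

import Mathlib

open MeasureTheory

lemma det_id_add_smulRight (n : ℕ) (φ : (Fin n → ℝ) →ₗ[ℝ] ℝ) (d : Fin n → ℝ) :
    LinearMap.det (LinearMap.id + φ.smulRight d) = 1 + φ d := by
  classical
  rw [← LinearMap.det_toMatrix (Pi.basisFun ℝ (Fin n))]
  have h : (LinearMap.toMatrix (Pi.basisFun ℝ (Fin n)) (Pi.basisFun ℝ (Fin n)))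
      (LinearMap.id + φ.smulRight d)
      = 1 + Matrix.replicateCol Unit d * Matrix.replicateRow Unit (fun i => φ (Pi.basisFun ℝ (Fin n) i)) := by
    ext k i
    simp [LinearMap.toMatrix_apply, Matrix.mul_apply, Matrix.one_apply, mul_comm, Pi.single_apply]
  rw [h, Matrix.det_one_add_replicateCol_mul_replicateRow]
  congr 1
  rw [dotProduct]
  rw [φ.pi_apply_eq_sum_univ d]
  simp only [Pi.basisFun_apply]
  refine Finset.sum_congr rfl fun x _ => ?_
  rw [mul_comm]
  congr 2
  ext j
  simp [Pi.single_apply, eq_comm]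

lemma coord_ge_neg_one (n : ℕ) (K : Set (Fin n → ℝ))
    (b : AffineBasis (Fin (n + 1)) ℝ (Fin n → ℝ)) (hb : ∀ j, b j ∈ K)
    (hmax : ∀ v : Fin (n + 1) → (Fin n → ℝ), (∀ j, v j ∈ K) →
      volume (convexHull ℝ (Set.range v)) ≤ volume (convexHull ℝ (Set.range b)))
    {x : Fin n → ℝ} (hx : x ∈ K) (j : Fin (n + 1)) : -1 ≤ b.coord j x := by
  classical
  set d : Fin n → ℝ := x - b j with hd
  set φ : (Fin n → ℝ) →ₗ[ℝ] ℝ := (b.coord j).linear with hφ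
  -- the affine map fixing the other vertices and sending `b j` to `x`
  set f : (Fin n → ℝ) →ᵃ[ℝ] (Fin n → ℝ) :=
    { toFun := fun y => y + (b.coord j) y • d
      linear := LinearMap.id + φ.smulRight d
      map_vadd' := by
        intro p v
        have hcv : (b.coord j) (v + p) = φ v + (b.coord j) p := (b.coord j).map_vadd p v
        show (v + p) + (b.coord j) (v + p) • d = (v + φ v • d) + (p + (b.coord j) p • d)
        rw [hcv, add_smul]
        abel } with hf
  have hfapp : ∀ y, f y = y + (b.coord j) y • d := fun _ => rfl
  have hfb : (⇑f ∘ ⇑b) = Function.update (⇑b) j x := by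
    funext i
    by_cases hij : i = j
    · subst hij
      simp only [Function.comp_apply, hfapp, Function.update_self, b.coord_apply,
        eq_self_iff_true, if_true, one_smul, hd]
      module
    · simp only [Function.comp_apply, hfapp, Function.update_of_ne hij, b.coord_apply,
        if_neg (Ne.symm hij), zero_smul, add_zero]
  have hdet : LinearMap.det f.linear = b.coord j x := by
    have hfl : f.linear = LinearMap.id + φ.smulRight d := rfl
    rw [hfl, det_id_add_smulRight]
    have hxd : (b.coord j) x = φ d + 1 := by
      have h2 := (b.coord j).map_vadd (b j) d
      have hdx : d +ᵥ b j = x := by rw [vadd_eq_add, hd, sub_add_cancel]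
      rw [hdx, b.coord_apply, if_pos rfl, vadd_eq_add] at h2
      exact h2
    linarith
  set S : Set (Fin n → ℝ) := convexHull ℝ (Set.range ⇑b) with hS
  have himg : f '' S = convexHull ℝ (Set.range (Function.update (⇑b) j x)) := by
    rw [hS, AffineMap.image_convexHull, ← Set.range_comp, hfb]
  have hvol : volume (f '' S) = ENNReal.ofReal |LinearMap.det f.linear| * volume S := by
    have hfy : ⇑f = (fun z => f 0 +ᵥ z) ∘ ⇑f.linear := by
      funext y
      have h3 := f.decomp
      rw [h3]
      simp [vadd_eq_add]
      abel
    rw [hfy, Set.image_comp, Set.image_vadd, measure_vadd, Measure.addHaar_image_linearMap]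
  have hSfin : volume S < ⊤ := ((Set.finite_range ⇑b).isCompact_convexHull ℝ).measure_lt_top
  have hSpos : 0 < volume S := by
    have hc : Finset.univ.centroid ℝ ⇑b ∈ interior S := b.centroid_mem_interior_convexHull
    have h4 : 0 < volume (interior S) := (isOpen_interior).measure_pos volume ⟨_, hc⟩
    exact h4.trans_le (measure_mono interior_subset)
  have hmem : ∀ i, Function.update (⇑b) j x i ∈ K := by
    intro i
    by_cases hij : i = j
    · subst hij; simpa using hx
    · simpa [Function.update_of_ne hij] using hb i
  have hle : ENNReal.ofReal |LinearMap.det f.linear| * volume S ≤ volume S := by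
    rw [← hvol, himg]
    exact hmax _ hmem
  have h1 : ENNReal.ofReal |LinearMap.det f.linear| ≤ 1 := by
    by_contra hcon
    push_neg at hcon
    have h5 := ENNReal.mul_lt_mul_left hSpos.ne' hSfin.ne hcon
    rw [one_mul] at h5
    exact absurd hle (not_le.mpr h5)
  have habs : |b.coord j x| ≤ 1 := by
    rw [hdet] at h1
    exact ENNReal.ofReal_le_one.mp h1
  linarith [neg_abs_le (b.coord j x)]

theorem maxvol_simplex_absorbs (n : ℕ) (hn : 1 ≤ n) (K : Set (Fin n → ℝ))
    (hKcomp : IsCompact K) (hKconv : Convex ℝ K) (hKint : (interior K).Nonempty)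
    (b : AffineBasis (Fin (n + 1)) ℝ (Fin n → ℝ)) (hb : ∀ j, b j ∈ K)
    (hmax : ∀ v : Fin (n + 1) → (Fin n → ℝ), (∀ j, v j ∈ K) →
      volume (convexHull ℝ (Set.range v)) ≤ volume (convexHull ℝ (Set.range b))) :
    K ⊆ AffineMap.homothety (Finset.univ.centroid ℝ b) ((n : ℝ) + 2) ''
        (convexHull ℝ (Set.range b)) := by
  classical
  intro x hx
  have hcoord : ∀ j, -1 ≤ b.coord j x := fun j => coord_ge_neg_one n K b hb hmax hx j
  set σ : ℝ := (n : ℝ) + 2 with hσ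
  have hσpos : (0 : ℝ) < σ := by positivity
  have hn1 : (0 : ℝ) < (n : ℝ) + 1 := by positivity
  set μ : Fin (n + 1) → ℝ := fun i => (b.coord i x + 1) / σ with hμ
  have hμ0 : ∀ i ∈ Finset.univ, 0 ≤ μ i := fun i _ =>
    div_nonneg (by linarith [hcoord i]) hσpos.le
  have hsum : ∑ i, μ i = 1 := by
    have h1 := b.sum_coord_apply_eq_one x
    have h2 : ∑ i : Fin (n + 1), (b.coord i x + 1) = σ := by
      rw [Finset.sum_add_distrib, h1, Finset.sum_const, Finset.card_univ, Fintype.card_fin]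
      simp [hσ]
      push_cast
      ring
    calc ∑ i, μ i = (∑ i : Fin (n + 1), (b.coord i x + 1)) / σ := by
          rw [Finset.sum_div]
      _ = 1 := by rw [h2, div_self hσpos.ne']
  have hy : Finset.univ.affineCombination ℝ ⇑b μ ∈ convexHull ℝ (Set.range ⇑b) :=
    affineCombination_mem_convexHull hμ0 hsum
  refine ⟨_, hy, ?_⟩
  rw [AffineMap.homothety_apply]
  have hyeq := Finset.univ.affineCombination_eq_linear_combination ⇑b μ hsum
  have hcw : ∑ _i : Fin (n + 1), ((n : ℝ) + 1)⁻¹ = 1 := by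
    rw [Finset.sum_const, Finset.card_univ, Fintype.card_fin, nsmul_eq_mul]
    push_cast
    field_simp
  have hceq : Finset.univ.centroid ℝ ⇑b = ∑ i, ((n : ℝ) + 1)⁻¹ • b i := by
    rw [Finset.centroid_def]
    have hweq : (Finset.univ.centroidWeights ℝ : Fin (n + 1) → ℝ)
        = fun _ => ((n : ℝ) + 1)⁻¹ := by
      funext i
      rw [Finset.centroidWeights_apply, Finset.card_univ, Fintype.card_fin]
      push_cast
      ring
    rw [hweq, Finset.univ.affineCombination_eq_linear_combination ⇑b _ hcw]
  have hxeq : x = ∑ i, b.coord i x • b i := by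
    have h6 := b.affineCombination_coord_eq_self x
    rw [Finset.univ.affineCombination_eq_linear_combination ⇑b _
      (b.sum_coord_apply_eq_one x)] at h6
    exact h6.symm
  rw [hyeq, hceq]
  conv_rhs => rw [hxeq]
  show σ • ((∑ i, μ i • b i) - ∑ i, ((n : ℝ) + 1)⁻¹ • b i) + (∑ i, ((n : ℝ) + 1)⁻¹ • b i)
      = ∑ i, b.coord i x • b i
  rw [← Finset.sum_sub_distrib, Finset.smul_sum, ← Finset.sum_add_distrib]
  refine Finset.sum_congr rfl fun i _ => ?_
  rw [← sub_smul, smul_smul, ← add_smul]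
  congr 1
  have hμi : μ i = (b.coord i x + 1) / σ := rfl
  rw [hμi, hσ]
  field_simp
  ring
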